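/- arXiv:0802.3761 — 2 statements merged into one kernel-verified Lean document; each statement's English description precedes it below -/
import Mathlib

section
/- Let l_0, l ∈ ℕ with l ≥ l_0, and write l = n l_0 + m with n ∈ ℕ and m ∈ {0, …, l_0 − 1}. Then for every k ∈ ℕ, e_k(N(0,I_l))² ≤ n · e_{[k^{l_0/l}]}(N(0,I_{l_0}))² + m · e_{[k^{1/l}]}(N(0,1))², where [x] denotes the integer part of x. -/
/-!
If `β` quantizes `N(0, I_a)` and `γ` quantizes `N(0, I_b)`, then `β × γ` quantizes
`N(0, I_{a+b}) = N(0, I_a) ⊗ N(0, I_b)` with `|β| |γ|` points, and since the squared Euclidean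
distance splits over the two blocks of coordinates, its distortion is at most the sum of the two
distortions. Iterating over `n` blocks of dimension `l₀` and `m` blocks of dimension `1` gives a
quantizer with `⌊k^{l₀/l}⌋^n ⌊k^{1/l}⌋^m ≤ k^{(n l₀ + m)/l} = k` points, and the minimal error
only decreases when more points are allowed.
-/

open MeasureTheory ProbabilityTheory Real Filter

noncomputable section

/-- Minimal `n`-th `L²` quantization error of a probability measure `μ` on a normed space. -/
def quantErrMeas {E : Type*} [NormedAddCommGroup E] [MeasurableSpace E]
    (μ : Measure E) (n : ℕ) : ℝ :=
  sInf { r : ℝ | ∃ α : Finset E, α.Nonempty ∧ α.card ≤ n ∧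
    r = (∫ x, (⨅ a : α, ‖x - (a : E)‖ ^ 2) ∂μ) ^ (1/2 : ℝ) }

/-- The standard Gaussian distribution `N(0, I_l)` on `ℝ^l` with the Euclidean norm. -/
def stdGaussian (l : ℕ) : Measure (EuclideanSpace ℝ (Fin l)) :=
  (Measure.pi fun _ : Fin l => gaussianReal 0 1).map (EuclideanSpace.equiv (Fin l) ℝ).symm

def minSqDist {E : Type*} [NormedAddCommGroup E] (β : Finset E) (x : E) : ℝ :=
  ⨅ b : β, ‖x - b‖ ^ 2

section minSqDist

variable {E : Type*} [NormedAddCommGroup E] {β : Finset E}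

lemma minSqDist_nonneg (x : E) : 0 ≤ minSqDist β x :=
  Real.iInf_nonneg fun _ => by positivity

lemma minSqDist_le {b : E} (hb : b ∈ β) (x : E) : minSqDist β x ≤ ‖x - b‖ ^ 2 :=
  ciInf_le (Set.finite_range _).bddBelow (⟨b, hb⟩ : β)

lemma minSqDist_eq_inf' (hβ : β.Nonempty) (x : E) :
    minSqDist β x = β.inf' hβ fun b => ‖x - b‖ ^ 2 := by
  obtain ⟨b, hb, hb_eq⟩ := Finset.exists_mem_eq_inf' hβ fun b => ‖x - b‖ ^ 2
  have : Nonempty β := hβ.to_subtype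
  exact le_antisymm (hb_eq ▸ minSqDist_le hb x) (le_ciInf fun c => Finset.inf'_le _ c.2)

lemma exists_minSqDist_eq (hβ : β.Nonempty) (x : E) : ∃ b ∈ β, minSqDist β x = ‖x - b‖ ^ 2 := by
  rw [minSqDist_eq_inf' hβ]
  exact Finset.exists_mem_eq_inf' hβ _

lemma continuous_minSqDist (hβ : β.Nonempty) : Continuous (minSqDist β) := by
  simp_rw [funext (minSqDist_eq_inf' hβ)]
  exact Continuous.finset_inf'_apply hβ fun b _ => by fun_prop

lemma integrable_minSqDist [MeasurableSpace E] [OpensMeasurableSpace E] {μ : Measure E}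
    (hμ : ∀ c, Integrable (fun x => ‖x - c‖ ^ 2) μ) (hβ : β.Nonempty) :
    Integrable (minSqDist β) μ := by
  obtain ⟨b, hb⟩ := hβ
  refine (hμ b).mono' (continuous_minSqDist ⟨b, hb⟩).aestronglyMeasurable
    (ae_of_all _ fun x => ?_)
  rw [Real.norm_of_nonneg (minSqDist_nonneg x)]
  exact minSqDist_le hb x

end minSqDist

section quantErrMeas

variable {E : Type*} [NormedAddCommGroup E] [MeasurableSpace E] {μ : Measure E} {N : ℕ}

lemma quantErrMeas_nonneg : 0 ≤ quantErrMeas μ N := by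
  refine Real.sInf_nonneg ?_
  rintro r ⟨β, -, -, rfl⟩
  exact Real.rpow_nonneg (integral_nonneg minSqDist_nonneg) _

lemma quantErrMeas_sq_le_integral {β : Finset E} (hβ : β.Nonempty) (hcard : β.card ≤ N) :
    quantErrMeas μ N ^ 2 ≤ ∫ x, minSqDist β x ∂μ := by
  have hD : 0 ≤ ∫ x, minSqDist β x ∂μ := integral_nonneg minSqDist_nonneg
  have hle : quantErrMeas μ N ≤ (∫ x, minSqDist β x ∂μ) ^ (1 / 2 : ℝ) := by
    refine csInf_le ⟨0, ?_⟩ ⟨β, hβ, hcard, rfl⟩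
    rintro r ⟨β, -, -, rfl⟩
    exact Real.rpow_nonneg (integral_nonneg minSqDist_nonneg) _
  calc quantErrMeas μ N ^ 2 ≤ ((∫ x, minSqDist β x ∂μ) ^ (1 / 2 : ℝ)) ^ 2 := by
        gcongr
        exact quantErrMeas_nonneg
    _ = ∫ x, minSqDist β x ∂μ := by
        rw [← Real.sqrt_eq_rpow, Real.sq_sqrt hD]

lemma le_quantErrMeas_sq {c : ℝ} (hN : 1 ≤ N)
    (h : ∀ β : Finset E, β.Nonempty → β.card ≤ N → c ≤ ∫ x, minSqDist β x ∂μ) :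
    c ≤ quantErrMeas μ N ^ 2 := by
  rcases le_or_gt c 0 with hc | hc
  · exact hc.trans (sq_nonneg _)
  have hsqrt : √c ≤ quantErrMeas μ N := by
    refine le_csInf ⟨_, {0}, Finset.singleton_nonempty 0, by simpa using hN, rfl⟩ ?_
    rintro r ⟨β, hβ, hcard, rfl⟩
    rw [← Real.sqrt_eq_rpow]
    exact Real.sqrt_le_sqrt (h β hβ hcard)
  calc c = √c ^ 2 := (Real.sq_sqrt hc.le).symm
    _ ≤ quantErrMeas μ N ^ 2 := by gcongr

lemma quantErrMeas_sq_le_of_le {M : ℕ} (hN : 1 ≤ N) (hNM : N ≤ M) :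
    quantErrMeas μ M ^ 2 ≤ quantErrMeas μ N ^ 2 :=
  le_quantErrMeas_sq hN fun _ hβ hcard => quantErrMeas_sq_le_integral hβ (hcard.trans hNM)

lemma quantErrMeas_eq_zero_of_subsingleton [Subsingleton E] (μ : Measure E) (hN : 1 ≤ N) :
    quantErrMeas μ N = 0 := by
  have h0 (x : E) : minSqDist {0} x = 0 := by simp [minSqDist, Subsingleton.elim x 0]
  have hsq := quantErrMeas_sq_le_integral (μ := μ) (Finset.singleton_nonempty (0 : E))
    (by simpa using hN)
  simp only [h0, integral_zero] at hsq
  exact pow_eq_zero_iff two_ne_zero |>.mp (le_antisymm hsq (sq_nonneg _))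

end quantErrMeas

section product

variable {E F G : Type*} [NormedAddCommGroup E] [NormedAddCommGroup F] [NormedAddCommGroup G]
  {T : E × F → G}

lemma minSqDist_image_prod_le
    (hT : ∀ p q, ‖T p - T q‖ ^ 2 = ‖p.1 - q.1‖ ^ 2 + ‖p.2 - q.2‖ ^ 2)
    [DecidableEq G] {β : Finset E} {γ : Finset F} (hβ : β.Nonempty) (hγ : γ.Nonempty)
    (p : E × F) :
    minSqDist ((β ×ˢ γ).image T) (T p) ≤ minSqDist β p.1 + minSqDist γ p.2 := by
  obtain ⟨b, hb, hb_eq⟩ := exists_minSqDist_eq hβ p.1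
  obtain ⟨c, hc, hc_eq⟩ := exists_minSqDist_eq hγ p.2
  calc minSqDist ((β ×ˢ γ).image T) (T p) ≤ ‖T p - T (b, c)‖ ^ 2 :=
        minSqDist_le (Finset.mem_image_of_mem T (Finset.mk_mem_product hb hc)) _
    _ = minSqDist β p.1 + minSqDist γ p.2 := by rw [hT, hb_eq, hc_eq]

variable [MeasurableSpace E] [MeasurableSpace F] [MeasurableSpace G]
  [OpensMeasurableSpace E] [OpensMeasurableSpace F] [OpensMeasurableSpace G]
  {μ : Measure E} {ν : Measure F} {ρ : Measure G} [IsProbabilityMeasure μ] [IsProbabilityMeasure ν]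

lemma integral_minSqDist_image_prod_le (hTρ : MeasurePreserving T (μ.prod ν) ρ)
    (hT : ∀ p q, ‖T p - T q‖ ^ 2 = ‖p.1 - q.1‖ ^ 2 + ‖p.2 - q.2‖ ^ 2)
    (hμ : ∀ c, Integrable (fun x => ‖x - c‖ ^ 2) μ) (hν : ∀ c, Integrable (fun y => ‖y - c‖ ^ 2) ν)
    [DecidableEq G] {β : Finset E} {γ : Finset F} (hβ : β.Nonempty) (hγ : γ.Nonempty) :
    ∫ z, minSqDist ((β ×ˢ γ).image T) z ∂ρ ≤ ∫ x, minSqDist β x ∂μ + ∫ y, minSqDist γ y ∂ν := by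
  have hα : ((β ×ˢ γ).image T).Nonempty := (hβ.product hγ).image T
  have hβγ : Integrable (fun p : E × F => minSqDist β p.1 + minSqDist γ p.2) (μ.prod ν) :=
    ((integrable_minSqDist hμ hβ).comp_fst ν).add ((integrable_minSqDist hν hγ).comp_snd μ)
  calc ∫ z, minSqDist ((β ×ˢ γ).image T) z ∂ρ
      = ∫ p, minSqDist ((β ×ˢ γ).image T) (T p) ∂(μ.prod ν) := by
        rw [← hTρ.map_eq, integral_map hTρ.measurable.aemeasurable
          (continuous_minSqDist hα).aestronglyMeasurable]
    _ ≤ ∫ p, (minSqDist β p.1 + minSqDist γ p.2) ∂(μ.prod ν) :=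
        integral_mono_of_nonneg (ae_of_all _ fun _ => minSqDist_nonneg _) hβγ
          (ae_of_all _ (minSqDist_image_prod_le hT hβ hγ))
    _ = ∫ x, minSqDist β x ∂μ + ∫ y, minSqDist γ y ∂ν := by
        rw [integral_add ((integrable_minSqDist hμ hβ).comp_fst ν)
          ((integrable_minSqDist hν hγ).comp_snd μ), integral_fun_fst, integral_fun_snd]
        simp

theorem quantErrMeas_sq_le_add_of_measurePreserving (hTρ : MeasurePreserving T (μ.prod ν) ρ)
    (hT : ∀ p q, ‖T p - T q‖ ^ 2 = ‖p.1 - q.1‖ ^ 2 + ‖p.2 - q.2‖ ^ 2)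
    (hμ : ∀ c, Integrable (fun x => ‖x - c‖ ^ 2) μ) (hν : ∀ c, Integrable (fun y => ‖y - c‖ ^ 2) ν)
    {k₁ k₂ : ℕ} (hk₁ : 1 ≤ k₁) (hk₂ : 1 ≤ k₂) :
    quantErrMeas ρ (k₁ * k₂) ^ 2 ≤ quantErrMeas μ k₁ ^ 2 + quantErrMeas ν k₂ ^ 2 := by
  classical
  suffices h : ∀ β : Finset E, β.Nonempty → β.card ≤ k₁ → ∀ γ : Finset F, γ.Nonempty →
      γ.card ≤ k₂ →
        quantErrMeas ρ (k₁ * k₂) ^ 2 ≤ ∫ x, minSqDist β x ∂μ + ∫ y, minSqDist γ y ∂ν by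
    -- pass to the infimum over `β`, then over `γ`
    rw [← sub_le_iff_le_add]
    refine le_quantErrMeas_sq hk₁ fun β hβ hβk => ?_
    rw [sub_le_comm]
    exact le_quantErrMeas_sq hk₂ fun γ hγ hγk => by linarith [h β hβ hβk γ hγ hγk]
  intro β hβ hβk γ hγ hγk
  have hcard : ((β ×ˢ γ).image T).card ≤ k₁ * k₂ :=
    Finset.card_image_le.trans ((Finset.card_product β γ).trans_le (Nat.mul_le_mul hβk hγk))
  exact (quantErrMeas_sq_le_integral ((hβ.product hγ).image T) hcard).trans
    (integral_minSqDist_image_prod_le hTρ hT hμ hν hβ hγ)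

end product

lemma measurePreserving_finAppend {α : Type*} [MeasurableSpace α] (μ : Measure α)
    [SigmaFinite μ] (a b : ℕ) :
    MeasurePreserving (fun p : (Fin a → α) × (Fin b → α) => Fin.append p.1 p.2)
      ((Measure.pi fun _ => μ).prod (Measure.pi fun _ => μ)) (Measure.pi fun _ => μ) := by
  have hmeas : Measurable fun p : (Fin a → α) × (Fin b → α) => Fin.append p.1 p.2 := by
    refine measurable_pi_lambda _ fun i => ?_
    induction i using Fin.addCases with
    | left i => simp only [Fin.append_left]; fun_prop
    | right j => simp only [Fin.append_right]; fun_prop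
  refine ⟨hmeas, (Measure.pi_eq fun s hs => ?_).symm⟩
  have hpre : (fun p : (Fin a → α) × (Fin b → α) => Fin.append p.1 p.2) ⁻¹' Set.univ.pi s =
      Set.univ.pi (fun i => s (Fin.castAdd b i)) ×ˢ Set.univ.pi (fun j => s (Fin.natAdd a j)) := by
    ext p
    simp [Fin.forall_fin_add]
  rw [Measure.map_apply hmeas (MeasurableSet.univ_pi hs), hpre, Measure.prod_prod,
    Measure.pi_pi, Measure.pi_pi, Fin.prod_univ_add]

lemma stdGaussian_eq_stdGaussian_euclideanSpace (l : ℕ) :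
    stdGaussian l = ProbabilityTheory.stdGaussian (EuclideanSpace ℝ (Fin l)) :=
  map_pi_eq_stdGaussian

instance (l : ℕ) : IsProbabilityMeasure (stdGaussian l) := by
  rw [stdGaussian_eq_stdGaussian_euclideanSpace]; infer_instance

lemma integrable_norm_sub_sq_stdGaussian (l : ℕ) (c : EuclideanSpace ℝ (Fin l)) :
    Integrable (fun x => ‖x - c‖ ^ 2) (stdGaussian l) := by
  rw [stdGaussian_eq_stdGaussian_euclideanSpace]
  exact (IsGaussian.memLp_two_id.sub (memLp_const c)).integrable_norm_pow two_ne_zero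

lemma measurePreserving_append_stdGaussian (a b : ℕ) :
    MeasurePreserving
      (fun p : EuclideanSpace ℝ (Fin a) × EuclideanSpace ℝ (Fin b) =>
        WithLp.toLp 2 (Fin.append p.1.ofLp p.2.ofLp))
      ((stdGaussian a).prod (stdGaussian b)) (stdGaussian (a + b)) := by
  have htoLp (n : ℕ) : MeasurePreserving (MeasurableEquiv.toLp 2 (Fin n → ℝ))
      (Measure.pi fun _ => gaussianReal 0 1) (stdGaussian n) := ⟨by fun_prop, rfl⟩
  exact ((htoLp (a + b)).comp (measurePreserving_finAppend _ a b)).comp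
    (((htoLp a).symm _).prod ((htoLp b).symm _))

lemma norm_sub_sq_toLp_append {a b : ℕ} (x x' : EuclideanSpace ℝ (Fin a))
    (y y' : EuclideanSpace ℝ (Fin b)) :
    ‖(WithLp.toLp 2 (Fin.append x.ofLp y.ofLp) : EuclideanSpace ℝ (Fin (a + b))) -
        WithLp.toLp 2 (Fin.append x'.ofLp y'.ofLp)‖ ^ 2 = ‖x - x'‖ ^ 2 + ‖y - y'‖ ^ 2 := by
  simp [EuclideanSpace.norm_sq_eq, Fin.sum_univ_add]

lemma quantErrMeas_stdGaussian_add_sq_le (a b : ℕ) {k₁ k₂ : ℕ} (hk₁ : 1 ≤ k₁) (hk₂ : 1 ≤ k₂) :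
    quantErrMeas (stdGaussian (a + b)) (k₁ * k₂) ^ 2 ≤
      quantErrMeas (stdGaussian a) k₁ ^ 2 + quantErrMeas (stdGaussian b) k₂ ^ 2 :=
  quantErrMeas_sq_le_add_of_measurePreserving (measurePreserving_append_stdGaussian a b)
    (fun p q => norm_sub_sq_toLp_append p.1 q.1 p.2 q.2) (integrable_norm_sub_sq_stdGaussian a)
    (integrable_norm_sub_sq_stdGaussian b) hk₁ hk₂

lemma quantErrMeas_stdGaussian_mul_sq_le (n d : ℕ) {k : ℕ} (hk : 1 ≤ k) :
    quantErrMeas (stdGaussian (n * d)) (k ^ n) ^ 2 ≤ n * quantErrMeas (stdGaussian d) k ^ 2 := by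
  induction n with
  | zero => rw [zero_mul, pow_zero, quantErrMeas_eq_zero_of_subsingleton _ le_rfl]; simp
  | succ n ih =>
    calc quantErrMeas (stdGaussian ((n + 1) * d)) (k ^ (n + 1)) ^ 2
        = quantErrMeas (stdGaussian (n * d + d)) (k ^ n * k) ^ 2 := by
          rw [Nat.succ_mul, pow_succ k]
      _ ≤ quantErrMeas (stdGaussian (n * d)) (k ^ n) ^ 2 + quantErrMeas (stdGaussian d) k ^ 2 :=
        quantErrMeas_stdGaussian_add_sq_le _ _ (Nat.one_le_pow _ _ hk) hk
      _ ≤ (n + 1 : ℕ) * quantErrMeas (stdGaussian d) k ^ 2 := by push_cast; linarith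

lemma one_le_floor_rpow {k : ℕ} (hk : 1 ≤ k) {x : ℝ} (hx : 0 ≤ x) : 1 ≤ ⌊(k : ℝ) ^ x⌋₊ :=
  Nat.le_floor (by simpa using Real.one_le_rpow (by exact_mod_cast hk) hx)

lemma floor_rpow_pow_mul_floor_rpow_pow_le {k : ℕ} (hk : 1 ≤ k) {x y : ℝ} {n m : ℕ}
    (hxy : n * x + m * y ≤ 1) :
    ⌊(k : ℝ) ^ x⌋₊ ^ n * ⌊(k : ℝ) ^ y⌋₊ ^ m ≤ k := by
  have hk' : (1 : ℝ) ≤ k := by exact_mod_cast hk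
  have hk0 : (0 : ℝ) < k := by positivity
  suffices h : (⌊(k : ℝ) ^ x⌋₊ : ℝ) ^ n * (⌊(k : ℝ) ^ y⌋₊ : ℝ) ^ m ≤ k by exact_mod_cast h
  calc (⌊(k : ℝ) ^ x⌋₊ : ℝ) ^ n * (⌊(k : ℝ) ^ y⌋₊ : ℝ) ^ m
      ≤ ((k : ℝ) ^ x) ^ n * ((k : ℝ) ^ y) ^ m := by
        gcongr <;> exact Nat.floor_le (by positivity)
    _ = (k : ℝ) ^ (n * x + m * y) := by
        rw [Real.rpow_add hk0, ← Real.rpow_mul_natCast hk0.le, ← Real.rpow_mul_natCast hk0.le,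
          mul_comm x, mul_comm y]
    _ ≤ (k : ℝ) ^ (1 : ℝ) := Real.rpow_le_rpow_of_exponent_le hk' hxy
    _ = k := Real.rpow_one _

theorem gaussian_quantization_block_inequality_general
    (l₀ l n m k : ℕ) (hdecomp : l = n * l₀ + m) (hk : 1 ≤ k) :
    (quantErrMeas (stdGaussian l) k) ^ 2
      ≤ n * (quantErrMeas (stdGaussian l₀) ⌊(k : ℝ) ^ ((l₀ : ℝ) / l)⌋₊) ^ 2
        + m * (quantErrMeas (stdGaussian 1) ⌊(k : ℝ) ^ (1 / (l : ℝ))⌋₊) ^ 2 := by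
  obtain rfl : l = n * l₀ + m * 1 := by rw [hdecomp, mul_one]
  set k₁ := ⌊(k : ℝ) ^ ((l₀ : ℝ) / ↑(n * l₀ + m * 1))⌋₊
  set k₂ := ⌊(k : ℝ) ^ (1 / (↑(n * l₀ + m * 1) : ℝ))⌋₊
  have hk₁ : 1 ≤ k₁ := one_le_floor_rpow hk (by positivity)
  have hk₂ : 1 ≤ k₂ := one_le_floor_rpow hk (by positivity)
  have hcard : k₁ ^ n * k₂ ^ m ≤ k := by
    refine floor_rpow_pow_mul_floor_rpow_pow_le hk ?_
    calc (n : ℝ) * (l₀ / ↑(n * l₀ + m * 1)) + m * (1 / ↑(n * l₀ + m * 1))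
        = ↑(n * l₀ + m * 1) / ↑(n * l₀ + m * 1) := by push_cast; ring
      _ ≤ 1 := div_self_le_one _
  calc quantErrMeas (stdGaussian (n * l₀ + m * 1)) k ^ 2
      ≤ quantErrMeas (stdGaussian (n * l₀ + m * 1)) (k₁ ^ n * k₂ ^ m) ^ 2 :=
        quantErrMeas_sq_le_of_le (Nat.mul_le_mul (Nat.one_le_pow _ _ hk₁)
          (Nat.one_le_pow _ _ hk₂)) hcard
    _ ≤ quantErrMeas (stdGaussian (n * l₀)) (k₁ ^ n) ^ 2
          + quantErrMeas (stdGaussian (m * 1)) (k₂ ^ m) ^ 2 :=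
        quantErrMeas_stdGaussian_add_sq_le _ _ (Nat.one_le_pow _ _ hk₁) (Nat.one_le_pow _ _ hk₂)
    _ ≤ _ := add_le_add (quantErrMeas_stdGaussian_mul_sq_le n l₀ hk₁)
          (quantErrMeas_stdGaussian_mul_sq_le m 1 hk₂)

/-- Writing `l = n l₀ + m` with `0 ≤ m < l₀`, the block-quantizer construction yields
`e_k(N(0,I_l))² ≤ n e_{⌊k^{l₀/l}⌋}(N(0,I_{l₀}))² + m e_{⌊k^{1/l}⌋}(N(0,1))²`. -/
theorem gaussian_quantization_block_inequality
    (l₀ l n m k : ℕ) (hl₀ : 1 ≤ l₀) (hl : l₀ ≤ l)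
    (hdecomp : l = n * l₀ + m) (hm : m < l₀) (hk : 1 ≤ k) :
    (quantErrMeas (stdGaussian l) k) ^ 2
      ≤ n * (quantErrMeas (stdGaussian l₀) ⌊(k : ℝ) ^ ((l₀ : ℝ) / l)⌋₊) ^ 2
        + m * (quantErrMeas (stdGaussian 1) ⌊(k : ℝ) ^ (1 / (l : ℝ))⌋₊) ^ 2 :=
  gaussian_quantization_block_inequality_general l₀ l n m k hdecomp hk
end
end

section
/- Let (λ_j)_{j≥1} be a nonincreasing sequence of positive reals, n, m, l ∈ ℕ, and set n_j := [n^{1/m} λ_{(j−1)l+1}^{l/2} (Π_{i=1}^m λ_{(i−1)l+1})^{−l/2m}] for j ∈ {1,…,m}, where [x] is the integer part. Assume n_j ≥ 1 for all j (which holds when m = m(n,l) := max{k ≥ 1 : n^{1/k} λ_{(k−1)l+1}^{l/2}(Π_{j=1}^k λ_{(j−1)l+1})^{−l/2k} ≥ 1}). Then Σ_{j=1}^m λ_{(j−1)l+1} n_j^{−2/l} ≤ 4^{1/l} m λ_{(m−1)l+1}. -/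
open Real

/-! The allocation is chosen so that, with `x_j` the real number whose integer part is `n_j`,
the quantity `λ_{jl} x_j^{-2/l}` does not depend on `j`. Its common value is at most
`λ_{(m-1)l}` because `x_{m-1} ≥ 1`, and passing from `x_j ≥ 1` to `⌊x_j⌋ ≥ x_j / 2` costs at
most the factor `2^{2/l} = 4^{1/l}` in each of the `m` terms. -/

theorem Nat.half_le_floor {K : Type*} [Field K] [LinearOrder K] [IsStrictOrderedRing K]
    [FloorSemiring K] {x : K} (hx : 1 ≤ x) : x / 2 ≤ ⌊x⌋₊ := by
  rcases le_or_gt x 2 with hx2 | hx2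
  · calc x / 2 ≤ 1 := by linarith
      _ ≤ ⌊x⌋₊ := by exact_mod_cast Nat.one_le_floor_iff x |>.mpr hx
  · calc x / 2 ≤ x - 1 := by linarith
      _ ≤ ⌊x⌋₊ := (Nat.sub_one_lt_floor x).le

theorem Real.natFloor_rpow_neg_le {x q : ℝ} (hx : 1 ≤ x) (hq : 0 ≤ q) :
    (⌊x⌋₊ : ℝ) ^ (-q) ≤ 2 ^ q * x ^ (-q) := by
  have hx0 : 0 < x := by linarith
  calc (⌊x⌋₊ : ℝ) ^ (-q) ≤ (x / 2) ^ (-q) :=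
        rpow_le_rpow_of_nonpos (by positivity) (Nat.half_le_floor hx) (neg_nonpos.mpr hq)
    _ = 2 ^ q * x ^ (-q) := by
        rw [div_rpow hx0.le zero_le_two, rpow_neg zero_le_two, div_inv_eq_mul, mul_comm]

theorem Real.mul_mul_rpow_mul_rpow_neg_inv {a b g s : ℝ} (ha : 0 ≤ a) (hb : 0 < b) (hg : 0 ≤ g)
    (hs : s ≠ 0) : b * (a * b ^ s * g) ^ (-s⁻¹) = (a * g) ^ (-s⁻¹) := by
  rw [mul_rpow (by positivity) hg, mul_rpow ha (by positivity), ← rpow_mul hb.le,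
    mul_neg, mul_inv_cancel₀ hs, rpow_neg_one, mul_rpow ha hg]
  field_simp

theorem allocation_estimate_general
    (lam : ℕ → ℝ) (hpos : ∀ j, 0 < lam j)
    (n m l : ℕ) (hm : 1 ≤ m) (hl : 1 ≤ l)
    (nj : ℕ → ℕ)
    (hnj : ∀ j : ℕ, nj j =
      ⌊(n : ℝ) ^ (1 / (m : ℝ)) * (lam (j * l)) ^ ((l : ℝ) / 2)
        * (∏ i ∈ Finset.range m, lam (i * l)) ^ (-(l : ℝ) / (2 * (m : ℝ)))⌋₊)
    (hnj1 : ∀ j < m, 1 ≤ nj j) :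
    ∑ j ∈ Finset.range m, lam (j * l) * ((nj j : ℝ)) ^ (-(2 : ℝ) / l)
      ≤ 4 ^ (1 / (l : ℝ)) * m * lam ((m - 1) * l) := by
  set a : ℝ := (n : ℝ) ^ (1 / (m : ℝ))
  set g : ℝ := (∏ i ∈ Finset.range m, lam (i * l)) ^ (-(l : ℝ) / (2 * (m : ℝ)))
  set x : ℕ → ℝ := fun j => a * lam (j * l) ^ ((l : ℝ) / 2) * g
  have hq : 0 ≤ (2 : ℝ) / l := by positivity
  have hx : ∀ j < m, 1 ≤ x j := fun j hj => (Nat.one_le_floor_iff _).mp (hnj j ▸ hnj1 j hj)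
  have hbalanced : ∀ j, lam (j * l) * x j ^ (-(2 : ℝ) / l) = (a * g) ^ (-(2 : ℝ) / l) := by
    intro j
    rw [show -(2 : ℝ) / l = -((l : ℝ) / 2)⁻¹ by rw [inv_div, neg_div]]
    exact mul_mul_rpow_mul_rpow_neg_inv (by positivity) (hpos _)
      (rpow_nonneg (Finset.prod_nonneg fun i _ => (hpos _).le) _) (by positivity)
  have hlast : (a * g) ^ (-(2 : ℝ) / l) ≤ lam ((m - 1) * l) := by
    rw [← hbalanced (m - 1)]
    exact mul_le_of_le_one_right (hpos _).le
      (rpow_le_one_of_one_le_of_nonpos (hx _ (by omega)) (by rw [neg_div]; linarith))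
  have hfour : (2 : ℝ) ^ ((2 : ℝ) / l) = 4 ^ (1 / (l : ℝ)) := by
    rw [div_eq_mul_one_div 2, rpow_mul zero_le_two]
    norm_num
  have hterm : ∀ j ∈ Finset.range m,
      lam (j * l) * (nj j : ℝ) ^ (-(2 : ℝ) / l) ≤ 4 ^ (1 / (l : ℝ)) * lam ((m - 1) * l) := by
    intro j hj
    calc lam (j * l) * (nj j : ℝ) ^ (-(2 : ℝ) / l)
        ≤ lam (j * l) * (2 ^ ((2 : ℝ) / l) * x j ^ (-(2 : ℝ) / l)) := by
          rw [hnj j, neg_div]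
          exact mul_le_mul_of_nonneg_left
            (natFloor_rpow_neg_le (hx j (Finset.mem_range.mp hj)) hq) (hpos _).le
      _ = 4 ^ (1 / (l : ℝ)) * (a * g) ^ (-(2 : ℝ) / l) := by
          rw [← hbalanced j, hfour]; ring
      _ ≤ 4 ^ (1 / (l : ℝ)) * lam ((m - 1) * l) := by gcongr
  calc _ ≤ (Finset.range m).card • (4 ^ (1 / (l : ℝ)) * lam ((m - 1) * l)) :=
        Finset.sum_le_card_nsmul _ _ _ hterm
    _ = _ := by rw [Finset.card_range, nsmul_eq_mul]; ring

/-- For a nonincreasing positive sequence `λ` (0-based; `λ_{jl}` is the leading eigenvalue of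
block `j`) and the allocation
`n_j = ⌊n^{1/m} λ_{jl}^{l/2} (∏_{i<m} λ_{il})^{-l/(2m)}⌋`, with all `n_j ≥ 1`, one has
`∑_{j<m} λ_{jl} n_j^{-2/l} ≤ 4^{1/l} m λ_{(m-1)l}`. -/
theorem allocation_estimate
    (lam : ℕ → ℝ) (hpos : ∀ j, 0 < lam j) (hanti : Antitone lam)
    (n m l : ℕ) (hn : 1 ≤ n) (hm : 1 ≤ m) (hl : 1 ≤ l)
    (nj : ℕ → ℕ)
    (hnj : ∀ j : ℕ, nj j =
      ⌊(n : ℝ) ^ (1 / (m : ℝ)) * (lam (j * l)) ^ ((l : ℝ) / 2)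
        * (∏ i ∈ Finset.range m, lam (i * l)) ^ (-(l : ℝ) / (2 * (m : ℝ)))⌋₊)
    (hnj1 : ∀ j < m, 1 ≤ nj j) :
    ∑ j ∈ Finset.range m, lam (j * l) * ((nj j : ℝ)) ^ (-(2 : ℝ) / l)
      ≤ 4 ^ (1 / (l : ℝ)) * m * lam ((m - 1) * l) :=
  allocation_estimate_general lam hpos n m l hm hl nj hnj hnj1
end
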